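/- If X is a minimal component of X_σ containing a growing letter (a tame minimal component), then there exist k ≥ 1 and a minimal alphabet D ⊆ C_niso of period k such that X = X_{σᵏ|_{D∪B}}; in fact D = alph_C(X). -/

import Mathlib

open List
open scoped Classical

namespace SubstPaper

variable {A : Type*}

/-- Apply a substitution letterwise to a word. -/
def applyW (σ : A → List A) (u : List A) : List A := u.flatMap σ

/-- `n`-th iterate of a substitution on a word. -/
def iterW (σ : A → List A) (n : ℕ) (u : List A) : List A := (applyW σ)^[n] u

/-- Non-erasing substitution. -/
def NonErasing (σ : A → List A) : Prop := ∀ a, σ a ≠ []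

/-- A letter is bounded if the lengths of its iterated images stay bounded. -/
def IsBounded (σ : A → List A) (a : A) : Prop := ∃ K, ∀ n, (iterW σ n [a]).length ≤ K

/-- A letter is growing if it is not bounded. -/
def IsGrowing (σ : A → List A) (a : A) : Prop := ¬ IsBounded σ a

/-- The prefix of `u` consisting of bounded letters, before the first growing letter. -/
noncomputable def LBw (σ : A → List A) (u : List A) : List A :=
  u.takeWhile (fun a => decide (IsBounded σ a))

/-- The first growing letter of `u` (junk value if none). -/
noncomputable def LCw [Inhabited A] (σ : A → List A) (u : List A) : A :=
  (u.dropWhile (fun a => decide (IsBounded σ a))).headI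

/-- The bounded suffix of `u`, after the last growing letter. -/
noncomputable def RBw (σ : A → List A) (u : List A) : List A :=
  (LBw σ u.reverse).reverse

/-- The last growing letter of `u` (junk value if none). -/
noncomputable def RCw [Inhabited A] (σ : A → List A) (u : List A) : A :=
  LCw σ u.reverse

/-- Growing letters occurring in a word. -/
def alphC (σ : A → List A) (u : List A) : Set A := {c | IsGrowing σ c ∧ c ∈ u}

/-- The map on alphabets induced by the substitution: `D ↦ ⋃_{a ∈ D} alph_C(σ(a))`. -/
def FAlph (σ : A → List A) (D : Set A) : Set A := ⋃ a ∈ D, alphC σ (σ a)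

/-- `D` is a `k`-periodic alphabet: nonempty set of growing letters, `k` least positive
with `F^[k] D = D`. -/
def IsKPeriodicAlph (σ : A → List A) (D : Set A) (k : ℕ) : Prop :=
  D.Nonempty ∧ (∀ a ∈ D, IsGrowing σ a) ∧ 0 < k ∧ (FAlph σ)^[k] D = D ∧
    ∀ j, 0 < j → (FAlph σ)^[j] D = D → k ≤ j

/-- `D` is a minimal alphabet: periodic with no proper nonempty periodic subalphabet. -/
def IsMinimalAlph (σ : A → List A) (D : Set A) : Prop :=
  (∃ k, IsKPeriodicAlph σ D k) ∧
    ∀ D' ⊆ D, D'.Nonempty → (∃ k', IsKPeriodicAlph σ D' k') → D' = D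

/-- The finite word `u` occurs in the bi-infinite word `x`. -/
def OccursIn (x : ℤ → A) (u : List A) : Prop :=
  ∃ i : ℤ, ∀ j : Fin u.length, x (i + j.1) = u.get j

/-- The substitution subshift `X_σ`. -/
def Xsub (σ : A → List A) : Set (ℤ → A) :=
  {x | ∀ u, OccursIn x u → ∃ a n, u <:+: iterW σ n [a]}

/-- The left shift on bi-infinite words. -/
def shiftT (x : ℤ → A) : ℤ → A := fun i => x (i + 1)

/-- A subshift: nonempty, closed, shift-invariant. -/
def IsSubshift [TopologicalSpace A] (X : Set (ℤ → A)) : Prop :=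
  X.Nonempty ∧ IsClosed X ∧ shiftT '' X = X

/-- A minimal subshift: contains no proper subshift. -/
def IsMinimalSubshift [TopologicalSpace A] (X : Set (ℤ → A)) : Prop :=
  IsSubshift X ∧ ∀ Y ⊆ X, IsSubshift Y → Y = X

/-- The periodic bi-infinite word `ωuω`. -/
noncomputable def perWord [Inhabited A] (u : List A) : ℤ → A :=
  fun i => u.getD ((i % (u.length : ℤ)).toNat) default

/-- The shift-orbit closure `X(x)` of a bi-infinite word. -/
def orbitClosure [TopologicalSpace A] (x : ℤ → A) : Set (ℤ → A) :=
  closure {y | ∃ k : ℤ, ∀ i, y i = x (i + k)}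

/-- `x` is the letterwise image of `y` under `σ`, with the origin at the image of
position `0`. -/
def IsSubstImage (σ : A → List A) (y x : ℤ → A) : Prop :=
  ∃ c : ℤ → ℤ, c 0 = 0 ∧ (∀ i, c (i + 1) = c i + (σ (y i)).length) ∧
    ∀ i : ℤ, ∀ j : Fin (σ (y i)).length, x (c i + j.1) = (σ (y i)).get j

/-- The induced map `σ̃` on subshifts: all shifts of images of elements of `X`. -/
def tildeS (σ : A → List A) (X : Set (ℤ → A)) : Set (ℤ → A) :=
  {z | ∃ x ∈ X, ∃ k : ℤ, IsSubstImage σ x (fun i => z (i + k))}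

/-- Growing letters occurring in some element of `X`. -/
def alphCX (σ : A → List A) (X : Set (ℤ → A)) : Set A :=
  {c | IsGrowing σ c ∧ ∃ x ∈ X, ∃ i : ℤ, x i = c}

/-- The subshift of the restriction `σᵏ|_E` (words whose factors occur in some
`σ^{kn}(a)`, `a ∈ E`). -/
def Xrestr (σ : A → List A) (E : Set A) (k : ℕ) : Set (ℤ → A) :=
  {x | ∀ u, OccursIn x u → ∃ a ∈ E, ∃ n, u <:+: iterW σ (k * n) [a]}

/-- A growing letter `c` is left-isolated: `σⁿ(c) = u c v` with `u` nonempty bounded. -/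
def LeftIsolated (σ : A → List A) (c : A) : Prop :=
  IsGrowing σ c ∧ ∃ n, 1 ≤ n ∧ ∃ u v : List A, u ≠ [] ∧ (∀ b ∈ u, IsBounded σ b) ∧
    iterW σ n [c] = u ++ c :: v

/-- A growing letter `c` is right-isolated: `σⁿ(c) = v c u` with `u` nonempty bounded. -/
def RightIsolated (σ : A → List A) (c : A) : Prop :=
  IsGrowing σ c ∧ ∃ n, 1 ≤ n ∧ ∃ u v : List A, u ≠ [] ∧ (∀ b ∈ u, IsBounded σ b) ∧
    iterW σ n [c] = v ++ c :: u

/-- Growing letter that is neither left- nor right-isolated (member of `C_niso`). -/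
def NonIsolated (σ : A → List A) (c : A) : Prop :=
  IsGrowing σ c ∧ ¬ LeftIsolated σ c ∧ ¬ RightIsolated σ c

/-- A periodic letter: bounded, and occurring in some `σⁿ(a)`, `n ≥ 1`. -/
def IsPeriodicLetter (σ : A → List A) (a : A) : Prop :=
  IsBounded σ a ∧ ∃ n, 1 ≤ n ∧ [a] <:+: iterW σ n [a]

/-- `(a,u,b)` is a 1-block of the word `w`. -/
def Is1Block (σ : A → List A) (w : List A) (t : A × List A × A) : Prop :=
  IsGrowing σ t.1 ∧ IsGrowing σ t.2.2 ∧ (∀ x ∈ t.2.1, IsBounded σ x) ∧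
    (t.1 :: (t.2.1 ++ [t.2.2])) <:+: w

/-- The descendant map on 1-blocks. -/
noncomputable def Desc [Inhabited A] (σ : A → List A) : A × List A × A → A × List A × A :=
  fun t => (RCw σ (σ t.1), RBw σ (σ t.1) ++ applyW σ t.2.1 ++ LBw σ (σ t.2.2), LCw σ (σ t.2.2))

/-- The bi-infinite word `ωu.wvω`. -/
noncomputable def biWord [Inhabited A] (u w v : List A) : ℤ → A := fun i =>
  if i < 0 then u.getD ((i % (u.length : ℤ)).toNat) default
  else if i < (w.length : ℤ) then w.getD i.toNat default
  else v.getD (((i - (w.length : ℤ)) % (v.length : ℤ)).toNat) default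

/-! ### Auxiliary word combinatorics -/

section AuxWords

variable {σ : A → List A}

/-- window of a bi-infinite word -/
def win (x : ℤ → A) (i : ℤ) (l : ℕ) : List A := (List.range l).map fun j : ℕ => x (i + (j : ℤ))

@[simp] lemma win_length (x : ℤ → A) (i : ℤ) (l : ℕ) : (win x i l).length = l := by
  simp [win]

lemma win_getElem (x : ℤ → A) (i : ℤ) (l : ℕ) (t : ℕ) (ht : t < (win x i l).length) :
    (win x i l)[t] = x (i + t) := by
  simp [win]

lemma win_append (x : ℤ → A) (i : ℤ) (a b : ℕ) :
    win x i (a + b) = win x i a ++ win x (i + a) b := by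
  unfold win
  rw [List.range_add, List.map_append, List.map_map]
  congr 1
  apply List.map_congr_left
  intro j _
  simp only [Function.comp_apply]
  congr 1
  push_cast
  ring

lemma occursIn_win (x : ℤ → A) (i : ℤ) (l : ℕ) : OccursIn x (win x i l) := by
  refine ⟨i, fun j => ?_⟩
  have := win_getElem x i l j.1 j.2
  simp only [List.get_eq_getElem]
  exact this.symm

lemma occursIn_iff {x : ℤ → A} {u : List A} : OccursIn x u ↔ ∃ i, u = win x i u.length := by
  constructor
  · rintro ⟨i, h⟩
    refine ⟨i, List.ext_get (by simp) fun t h1 h2 => ?_⟩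
    have := h ⟨t, h1⟩
    simp only [List.get_eq_getElem] at this ⊢
    rw [← this, win_getElem]
  · rintro ⟨i, h⟩
    have := occursIn_win x i u.length
    rwa [← h] at this

lemma win_infix {x : ℤ → A} {i i' : ℤ} {l l' : ℕ} (h1 : i' ≤ i) (h2 : i + l ≤ i' + l') :
    win x i l <:+: win x i' l' := by
  obtain ⟨a, rfl⟩ : ∃ a : ℕ, i = i' + a := ⟨(i - i').toNat, by omega⟩
  obtain ⟨b, rfl⟩ : ∃ b : ℕ, l' = a + l + b := ⟨l' - a - l, by push_cast at h2; omega⟩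
  refine ⟨win x i' a, win x (i' + a + l) b, ?_⟩
  rw [show (a:ℕ) + l + b = (a + l) + b from rfl, win_append, win_append]
  push_cast
  ring_nf

lemma occursIn_mono {x : ℤ → A} {u v : List A} (huv : u <:+: v) (h : OccursIn x v) :
    OccursIn x u := by
  obtain ⟨s, t, rfl⟩ := huv
  obtain ⟨i, hi⟩ := h
  refine ⟨i + s.length, fun j => ?_⟩
  have hr : s.length + j.1 < (s ++ u ++ t).length := by
    simp only [List.length_append]; omega
  have h2 := hi ⟨s.length + j.1, hr⟩
  simp only [List.get_eq_getElem] at h2 ⊢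
  rw [List.getElem_append_left (by simp only [List.length_append]; omega),
    List.getElem_append_right (by omega)] at h2
  simp only [Nat.add_sub_cancel_left] at h2
  rw [← h2]
  congr 1
  push_cast
  ring

end AuxWords

section ApplyKit

variable {σ : A → List A}

lemma applyW_append (σ : A → List A) (u v : List A) :
    applyW σ (u ++ v) = applyW σ u ++ applyW σ v := List.flatMap_append

@[simp] lemma applyW_nil (σ : A → List A) : applyW σ [] = [] := rfl

@[simp] lemma applyW_singleton (σ : A → List A) (a : A) : applyW σ [a] = σ a := by
  simp [applyW]

lemma mem_applyW {c : A} {u : List A} : c ∈ applyW σ u ↔ ∃ b ∈ u, c ∈ σ b :=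
  List.mem_flatMap

lemma applyW_infix {u v : List A} (h : u <:+: v) : applyW σ u <:+: applyW σ v := by
  obtain ⟨s, t, rfl⟩ := h
  exact ⟨applyW σ s, applyW σ t, by rw [← applyW_append, ← applyW_append]⟩

lemma length_applyW_ge (hne : NonErasing σ) (u : List A) :
    u.length ≤ (applyW σ u).length := by
  induction u with
  | nil => simp
  | cons a u ih =>
    have : applyW σ (a :: u) = σ a ++ applyW σ u := rfl
    rw [this]
    simp only [List.length_append, List.length_cons]
    have := List.length_pos_iff.2 (hne a)
    omega

lemma applyW_ne_nil (hne : NonErasing σ) {u : List A} (h : u ≠ []) : applyW σ u ≠ [] := by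
  intro hc
  have h1 := length_applyW_ge hne u
  rw [hc] at h1
  simp at h1
  exact h h1

end ApplyKit

section IterKit

variable {σ : A → List A}

@[simp] lemma iterW_zero (σ : A → List A) (u : List A) : iterW σ 0 u = u := rfl

lemma iterW_succ (σ : A → List A) (n : ℕ) (u : List A) :
    iterW σ (n + 1) u = iterW σ n (applyW σ u) := Function.iterate_succ_apply _ _ _

lemma iterW_succ' (σ : A → List A) (n : ℕ) (u : List A) :
    iterW σ (n + 1) u = applyW σ (iterW σ n u) := Function.iterate_succ_apply' _ _ _

lemma iterW_add (σ : A → List A) (m n : ℕ) (u : List A) :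
    iterW σ (m + n) u = iterW σ m (iterW σ n u) := Function.iterate_add_apply _ _ _ _

lemma iterW_infix {u v : List A} (n : ℕ) (h : u <:+: v) : iterW σ n u <:+: iterW σ n v := by
  induction n with
  | zero => exact h
  | succ n ih =>
    rw [iterW_succ', iterW_succ']
    exact applyW_infix ih

lemma iterW_append (σ : A → List A) (n : ℕ) (u v : List A) :
    iterW σ n (u ++ v) = iterW σ n u ++ iterW σ n v := by
  induction n with
  | zero => rfl
  | succ n ih => rw [iterW_succ', iterW_succ', iterW_succ', ih, applyW_append]

lemma length_iterW_mono (hne : NonErasing σ) (n : ℕ) (u : List A) :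
    (iterW σ n u).length ≤ (iterW σ (n + 1) u).length := by
  rw [iterW_succ']
  exact length_applyW_ge hne _

lemma length_iterW_mono' (hne : NonErasing σ) {m n : ℕ} (h : m ≤ n) (u : List A) :
    (iterW σ m u).length ≤ (iterW σ n u).length := by
  induction n with
  | zero => simpa [Nat.le_zero.1 h]
  | succ n ih =>
    rcases Nat.lt_or_ge m (n+1) with h' | h'
    · exact le_trans (ih (by omega)) (length_iterW_mono hne n u)
    · have : m = n + 1 := by omega
      simp [this]

lemma growing_len (hne : NonErasing σ) {a : A} (hg : IsGrowing σ a) (K : ℕ) :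
    ∃ N, ∀ n ≥ N, K ≤ (iterW σ n [a]).length := by
  rw [IsGrowing, IsBounded] at hg
  push_neg at hg
  obtain ⟨n, hn⟩ := hg K
  exact ⟨n, fun m hm => le_trans (le_of_lt hn) (length_iterW_mono' hne hm _)⟩

lemma infix_singleton_of_mem {c : A} {u : List A} (h : c ∈ u) : [c] <:+: u := by
  obtain ⟨s, t, rfl⟩ := List.append_of_mem h
  exact ⟨s, t, by simp⟩

lemma isBounded_of_infix_iter {b : A} (hb : IsBounded σ b) {m : ℕ} {u : List A}
    (h : u <:+: iterW σ m [b]) {c : A} (hc : c ∈ u) : IsBounded σ c := by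
  obtain ⟨K, hK⟩ := hb
  refine ⟨K, fun n => ?_⟩
  have h1 : iterW σ n [c] <:+: iterW σ n (iterW σ m [b]) :=
    iterW_infix n ((infix_singleton_of_mem hc).trans h)
  rw [← iterW_add] at h1
  exact le_trans h1.length_le (hK _)

lemma isBounded_of_mem_apply {b c : A} (hb : IsBounded σ b) (hc : c ∈ σ b) : IsBounded σ c :=
  isBounded_of_infix_iter hb (m := 1) (by
    rw [show iterW σ 1 [b] = applyW σ [b] from iterW_succ' σ 0 [b]]
    simp) hc

end IterKit
section LenKit

variable {σ : A → List A}

/-- maximal image length (at least 1) -/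
noncomputable def maxLen [Fintype A] (σ : A → List A) : ℕ :=
  max 1 (Finset.univ.sup fun a => (σ a).length)

lemma one_le_maxLen [Fintype A] (σ : A → List A) : 1 ≤ maxLen σ := le_max_left _ _

lemma length_le_maxLen [Fintype A] (σ : A → List A) (a : A) : (σ a).length ≤ maxLen σ := by
  have := Finset.le_sup (f := fun a => (σ a).length) (Finset.mem_univ a)
  exact le_trans this (le_max_right _ _)

lemma length_applyW_le [Fintype A] (σ : A → List A) (u : List A) :
    (applyW σ u).length ≤ u.length * maxLen σ := by
  induction u with
  | nil => simp
  | cons a u ih =>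
    have : applyW σ (a :: u) = σ a ++ applyW σ u := rfl
    rw [this]
    simp only [List.length_append, List.length_cons]
    have := length_le_maxLen σ a
    calc (σ a).length + (applyW σ u).length ≤ maxLen σ + u.length * maxLen σ := by omega
    _ = (u.length + 1) * maxLen σ := by ring

lemma exists_global_bound [Fintype A] (σ : A → List A) :
    ∃ K, ∀ b, IsBounded σ b → ∀ n, (iterW σ n [b]).length ≤ K := by
  classical
  refine ⟨Finset.univ.sup fun a => if h : IsBounded σ a then h.choose else 0, fun b hb n => ?_⟩
  have h1 : (iterW σ n [b]).length ≤ hb.choose := hb.choose_spec n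
  refine le_trans h1 (le_trans (le_of_eq ?_) (Finset.le_sup (Finset.mem_univ b)))
  rw [dif_pos hb]

end LenKit

section AlphKit

variable {σ : A → List A}

lemma FAlph_mono {D E : Set A} (h : D ⊆ E) : FAlph σ D ⊆ FAlph σ E := by
  intro c hc
  simp only [FAlph, Set.mem_iUnion] at hc ⊢
  obtain ⟨a, ha, hc⟩ := hc
  exact ⟨a, h ha, hc⟩

lemma FAlph_iterate_mono {D E : Set A} (k : ℕ) (h : D ⊆ E) :
    (FAlph σ)^[k] D ⊆ (FAlph σ)^[k] E := by
  induction k with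
  | zero => exact h
  | succ k ih =>
    rw [Function.iterate_succ_apply', Function.iterate_succ_apply']
    exact FAlph_mono ih

lemma mem_alphC {c : A} {u : List A} : c ∈ alphC σ u ↔ IsGrowing σ c ∧ c ∈ u := Iff.rfl

lemma alphC_applyW (u : List A) : alphC σ (applyW σ u) = FAlph σ (alphC σ u) := by
  ext c
  simp only [mem_alphC, FAlph, Set.mem_iUnion]
  constructor
  · rintro ⟨hg, hc⟩
    obtain ⟨b, hb, hcb⟩ := mem_applyW.1 hc
    have hbg : IsGrowing σ b := by
      intro hbb
      exact hg (isBounded_of_mem_apply hbb hcb)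
    exact ⟨b, ⟨hbg, hb⟩, hg, hcb⟩
  · rintro ⟨b, ⟨hbg, hb⟩, hg, hcb⟩
    exact ⟨hg, mem_applyW.2 ⟨b, hb, hcb⟩⟩

lemma alphC_singleton {a : A} (hg : IsGrowing σ a) : alphC σ [a] = {a} := by
  ext c
  simp only [mem_alphC, List.mem_singleton, Set.mem_singleton_iff]
  constructor
  · rintro ⟨_, rfl⟩; rfl
  · rintro rfl; exact ⟨hg, rfl⟩

lemma alphC_iter_singleton {a : A} (hg : IsGrowing σ a) (n : ℕ) :
    alphC σ (iterW σ n [a]) = (FAlph σ)^[n] {a} := by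
  induction n with
  | zero => simpa using alphC_singleton hg
  | succ n ih =>
    rw [iterW_succ', alphC_applyW, ih, Function.iterate_succ_apply']

lemma iterate_period_mul {F : Set A → Set A} {D : Set A} {k : ℕ} (h : F^[k] D = D) (s : ℕ) :
    F^[k * s] D = D := by
  induction s with
  | zero => simp
  | succ s ih =>
    rw [Nat.mul_succ, Function.iterate_add_apply, h, ih]

end AlphKit

section ExtractKit

lemma extract_mid {P u S E m F : List A} (heq : P ++ u ++ S = E ++ m ++ F)
    (h1 : P.length ≤ E.length) (h2 : E.length + m.length ≤ P.length + u.length) :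
    m <:+: u := by
  have hlen : m = ((u.drop (E.length - P.length)).take m.length) := by
    refine List.ext_get ?_ fun r hr1 hr2 => ?_
    · rw [List.length_take, List.length_drop]
      have : (P ++ u ++ S).length = (E ++ m ++ F).length := by rw [heq]
      simp only [List.length_append] at this
      omega
    · simp only [List.get_eq_getElem, List.getElem_take, List.getElem_drop]
      have hidx : E.length + r < (E ++ m ++ F).length := by
        simp only [List.length_append]; omega
      have hidx' : E.length + r < (P ++ u ++ S).length := by rw [heq]; exact hidx
      have e1 : (E ++ m ++ F)[E.length + r]'hidx = m[r]'hr1 := by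
        rw [List.getElem_append_left (by simp only [List.length_append]; omega),
          List.getElem_append_right (by omega)]
        simp
      have e2 : (P ++ u ++ S)[E.length + r]'hidx' = u[E.length - P.length + r]'(by omega) := by
        rw [List.getElem_append_left (by simp only [List.length_append]; omega),
          List.getElem_append_right (by omega)]
        congr 1
        omega
      have : (P ++ u ++ S)[E.length + r]'hidx' = (E ++ m ++ F)[E.length + r]'hidx := by
        congr 1
      rw [e1] at this
      rw [e2] at this
      rw [← this]
  rw [hlen]
  exact ((List.take_prefix _ _).isInfix).trans ((List.drop_suffix _ _).isInfix)

end ExtractKit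

section CumKit

variable [Fintype A] {σ : A → List A}

/-- cumulative image length -/
def cum (σ : A → List A) (W : List A) (j : ℕ) : ℕ := (applyW σ (W.take j)).length

lemma cum_mono {W : List A} {j j' : ℕ} (h : j ≤ j') : cum σ W j ≤ cum σ W j' := by
  unfold cum
  have h1 : W.take j <+: W.take j' := by
    have := List.take_prefix j (W.take j')
    rwa [List.take_take, min_eq_left h] at this
  exact (applyW_infix h1.isInfix).length_le

@[simp] lemma cum_zero (W : List A) : cum σ W 0 = 0 := by simp [cum]

lemma cum_succ_le (W : List A) (j : ℕ) : cum σ W (j + 1) ≤ cum σ W j + maxLen σ := by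
  unfold cum
  rw [List.take_succ, applyW_append]
  simp only [List.length_append]
  have : (applyW σ W[j]?.toList).length ≤ maxLen σ := by
    cases h : W[j]? with
    | none => simpa using Nat.zero_le _
    | some a => simpa using length_le_maxLen σ a
  omega

lemma cum_add_le (W : List A) (j t : ℕ) : cum σ W (j + t) ≤ cum σ W j + t * maxLen σ := by
  induction t with
  | zero => simp
  | succ t ih =>
    calc cum σ W (j + (t + 1)) = cum σ W ((j + t) + 1) := by ring_nf
    _ ≤ cum σ W (j + t) + maxLen σ := cum_succ_le W _
    _ ≤ cum σ W j + t * maxLen σ + maxLen σ := by omega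
    _ = cum σ W j + (t + 1) * maxLen σ := by ring

lemma cum_le (W : List A) (j : ℕ) : cum σ W j ≤ j * maxLen σ := by
  have := cum_add_le (σ := σ) W 0 j
  simpa using this

lemma cum_ge (hne : NonErasing σ) {W : List A} {j : ℕ} (h : j ≤ W.length) :
    j ≤ cum σ W j := by
  have := length_applyW_ge hne (W.take j)
  rwa [List.length_take, min_eq_left h] at this

lemma cum_sat {W : List A} {j : ℕ} (h : W.length ≤ j) : cum σ W j = (applyW σ W).length := by
  rw [cum, List.take_of_length_le h]

lemma cum_lt (hne : NonErasing σ) {W : List A} {j : ℕ} (h : j < W.length) :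
    cum σ W j < cum σ W (j + 1) := by
  unfold cum
  rw [List.take_succ, applyW_append, List.getElem?_eq_getElem h]
  simp only [List.length_append]
  have h1 : (applyW σ [W[j]]).length ≥ 1 := by
    have := List.length_pos_iff.2 (hne W[j])
    simpa [Nat.one_le_iff_ne_zero, Nat.pos_iff_ne_zero] using this
  simp only [Option.toList_some] at *
  omega

lemma applyW_decomp (σ : A → List A) (W : List A) (j l : ℕ) :
    applyW σ W = applyW σ (W.take j) ++ applyW σ ((W.drop j).take l)
      ++ applyW σ ((W.drop j).drop l) := by
  rw [← applyW_append, ← applyW_append, List.append_assoc, List.take_append_drop, List.take_append_drop]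

lemma cum_decomp_len (W : List A) (j l : ℕ) :
    cum σ W j + (applyW σ ((W.drop j).take l)).length = cum σ W (j + l) := by
  unfold cum
  rw [← List.length_append, ← applyW_append, ← List.take_add]

end CumKit
section TopKit

variable [Fintype A] [TopologicalSpace A] [DiscreteTopology A]

lemma cylinder_isOpen (y : ℤ → A) (s : Finset ℤ) :
    IsOpen {z : ℤ → A | ∀ i ∈ s, z i = y i} := by
  have : {z : ℤ → A | ∀ i ∈ s, z i = y i} = ⋂ i ∈ s, {z : ℤ → A | z i = y i} := by
    ext z; simp
  rw [this]
  refine isOpen_biInter_finset fun i _ => ?_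
  have hc : Continuous fun z : ℤ → A => z i := continuous_apply i
  exact hc.isOpen_preimage {y i} (isOpen_discrete _)

lemma cylinder_mem_nhds (y : ℤ → A) (s : Finset ℤ) :
    {z : ℤ → A | ∀ i ∈ s, z i = y i} ∈ nhds y :=
  (cylinder_isOpen y s).mem_nhds (by simp)

lemma closure_agree {S : Set (ℤ → A)} {z : ℤ → A} (hz : z ∈ closure S) (s : Finset ℤ) :
    ∃ w ∈ S, ∀ i ∈ s, w i = z i := by
  obtain ⟨w, hw1, hw2⟩ := mem_closure_iff.1 hz _ (cylinder_isOpen z s) (by simp)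
  exact ⟨w, hw2, hw1⟩

lemma exists_cluster {X : Set (ℤ → A)} (hX : IsClosed X) (p : ℕ → ℤ → A)
    (hp : ∀ n, p n ∈ X) :
    ∃ y ∈ X, ∀ (s : Finset ℤ) (n₀ : ℕ), ∃ n, n₀ ≤ n ∧ ∀ i ∈ s, y i = p n i := by
  obtain ⟨y, hy⟩ := exists_clusterPt_of_compactSpace (Filter.map p Filter.atTop)
  have hymem : y ∈ X := by
    have h1 : Filter.map p Filter.atTop ≤ Filter.principal X := by
      rw [Filter.le_principal_iff, Filter.mem_map]
      exact Filter.Eventually.of_forall hp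
    have := mem_closure_iff_clusterPt.2 (hy.mono h1)
    rwa [hX.closure_eq] at this
  refine ⟨y, hymem, fun s n₀ => ?_⟩
  have hy' : MapClusterPt y Filter.atTop p := hy
  have hfreq := (mapClusterPt_iff_frequently.1 hy') _ (cylinder_mem_nhds y s)
  obtain ⟨n, hn1, hn2⟩ := (Filter.frequently_atTop.1 hfreq) n₀
  exact ⟨n, hn1, fun i hi => (hn2 i hi).symm⟩

end TopKit

section ShiftKit

def shiftZ (k : ℤ) (x : ℤ → A) : ℤ → A := fun i => x (i + k)

@[simp] lemma shiftZ_apply (k : ℤ) (x : ℤ → A) (i : ℤ) : shiftZ k x i = x (i + k) := rfl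

lemma shiftT_eq_shiftZ (x : ℤ → A) : shiftT x = shiftZ 1 x := rfl

lemma shiftZ_zero (x : ℤ → A) : shiftZ 0 x = x := funext fun i => by simp

lemma shiftZ_shiftZ (k k' : ℤ) (x : ℤ → A) :
    shiftZ k (shiftZ k' x) = shiftZ (k + k') x := funext fun i => by
  simp [shiftZ, add_assoc]

lemma win_shiftZ (x : ℤ → A) (k i : ℤ) (l : ℕ) : win (shiftZ k x) i l = win x (i + k) l := by
  unfold win
  apply List.map_congr_left
  intro j _
  simp only [shiftZ_apply]
  congr 1
  ring

lemma occursIn_shiftZ {x : ℤ → A} {u : List A} (k : ℤ) (h : OccursIn x u) :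
    OccursIn (shiftZ k x) u := by
  rw [occursIn_iff] at h ⊢
  obtain ⟨i, hi⟩ := h
  exact ⟨i - k, by rwa [win_shiftZ, sub_add_cancel]⟩

variable [TopologicalSpace A] [DiscreteTopology A]

lemma continuous_shiftZ (k : ℤ) : Continuous (shiftZ k : (ℤ → A) → (ℤ → A)) :=
  continuous_pi fun i => continuous_apply (i + k)

noncomputable def shiftHomeo : (ℤ → A) ≃ₜ (ℤ → A) where
  toFun := shiftT
  invFun := shiftZ (-1)
  left_inv := fun x => funext fun i => by simp [shiftT, shiftZ]
  right_inv := fun x => funext fun i => by simp [shiftT, shiftZ]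
  continuous_toFun := continuous_pi fun i => continuous_apply (i + 1)
  continuous_invFun := continuous_shiftZ (-1)

lemma shiftT_eq_homeo : (shiftT : (ℤ → A) → (ℤ → A)) = shiftHomeo := rfl

lemma mem_shiftZ {X : Set (ℤ → A)} (hsub : IsSubshift X) (k : ℤ) {x : ℤ → A} (hx : x ∈ X) :
    shiftZ k x ∈ X := by
  induction k using Int.induction_on with
  | zero => rwa [shiftZ_zero]
  | succ k ih =>
    have : shiftZ (k + 1) x = shiftT (shiftZ k x) := funext fun i => by
      simp [shiftT, shiftZ]; congr 1; ring
    rw [this, ← hsub.2.2]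
    exact ⟨_, ih, rfl⟩
  | pred k ih =>
    rw [← hsub.2.2] at ih
    obtain ⟨w, hw, hweq⟩ := ih
    have hwe : w = shiftZ (-(k : ℤ) + -1) x := by
      funext i
      have h2 := congrFun hweq (i - 1)
      simp only [shiftT, shiftZ_apply] at h2
      rw [sub_add_cancel] at h2
      rw [h2]
      congr 1
      ring
    have hmem : shiftZ (-(k : ℤ) + -1) x ∈ X := by rw [← hwe]; exact hw
    convert hmem using 2 <;> omega

/-- the shift orbit of a point -/
def orbSet (x : ℤ → A) : Set (ℤ → A) := {y | ∃ k : ℤ, y = shiftZ k x}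

lemma self_mem_orbSet (x : ℤ → A) : x ∈ orbSet x := ⟨0, (shiftZ_zero x).symm⟩

lemma shiftT_image_orbSet (x : ℤ → A) : shiftT '' orbSet x = orbSet x := by
  ext y
  constructor
  · rintro ⟨z, ⟨k, rfl⟩, rfl⟩
    exact ⟨1 + k, by rw [shiftT_eq_shiftZ, shiftZ_shiftZ]⟩
  · rintro ⟨k, rfl⟩
    refine ⟨shiftZ (k - 1) x, ⟨k - 1, rfl⟩, ?_⟩
    rw [shiftT_eq_shiftZ, shiftZ_shiftZ]
    congr 1
    ring

lemma isSubshift_orbitClosure (x : ℤ → A) : IsSubshift (closure (orbSet x)) := by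
  refine ⟨⟨x, subset_closure (self_mem_orbSet x)⟩, isClosed_closure, ?_⟩
  rw [shiftT_eq_homeo, shiftHomeo.image_closure, ← shiftT_eq_homeo, shiftT_image_orbSet]

lemma orbitClosure_subset {X : Set (ℤ → A)} (hsub : IsSubshift X) {x : ℤ → A} (hx : x ∈ X) :
    closure (orbSet x) ⊆ X := by
  refine closure_minimal ?_ hsub.2.1
  rintro y ⟨k, rfl⟩
  exact mem_shiftZ hsub k hx

lemma occursIn_of_mem_orbitClosure [Fintype A] {x z : ℤ → A} {u : List A}
    (hz : z ∈ closure (orbSet x)) (h : OccursIn z u) : OccursIn x u := by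
  obtain ⟨i, hu⟩ := occursIn_iff.1 h
  obtain ⟨w, ⟨k, rfl⟩, hagree⟩ := closure_agree hz
    ((Finset.range u.length).image fun t : ℕ => i + (t : ℤ))
  rw [occursIn_iff]
  refine ⟨i + k, ?_⟩
  conv_lhs => rw [hu]
  refine List.ext_get (by simp) fun t h1 h2 => ?_
  simp only [List.get_eq_getElem]
  rw [win_getElem _ _ _ _ (by simpa using h1), win_getElem _ _ _ _ (by simpa using h2)]
  have ht : i + (t : ℤ) ∈ (Finset.range u.length).image fun t : ℕ => i + (t : ℤ) := by
    refine Finset.mem_image.2 ⟨t, ?_, rfl⟩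
    rw [Finset.mem_range]
    simpa using h1
  have h3 := hagree _ ht
  simp only [shiftZ_apply] at h3
  rw [← h3]
  congr 1
  ring

end ShiftKit
section LangKit

variable [Fintype A] [TopologicalSpace A] [DiscreteTopology A]

def Lang (X : Set (ℤ → A)) : Set (List A) := {u | ∃ x ∈ X, OccursIn x u}

lemma Lang_mono {X Y : Set (ℤ → A)} (h : X ⊆ Y) : Lang X ⊆ Lang Y := by
  rintro u ⟨x, hx, hocc⟩
  exact ⟨x, h hx, hocc⟩

lemma Lang_infix {X : Set (ℤ → A)} {u v : List A} (huv : u <:+: v) (hv : v ∈ Lang X) :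
    u ∈ Lang X := by
  obtain ⟨x, hx, hocc⟩ := hv
  exact ⟨x, hx, occursIn_mono huv hocc⟩

lemma win_mem_Lang {X : Set (ℤ → A)} {x : ℤ → A} (hx : x ∈ X) (i : ℤ) (l : ℕ) :
    win x i l ∈ Lang X := ⟨x, hx, occursIn_win x i l⟩

lemma singleton_mem_Lang {X : Set (ℤ → A)} {u : List A} {c : A} (hc : c ∈ u)
    (hu : u ∈ Lang X) : [c] ∈ Lang X :=
  Lang_infix (infix_singleton_of_mem hc) hu

lemma mem_of_forall_win_mem {X : Set (ℤ → A)} (hX : IsSubshift X) {y : ℤ → A}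
    (h : ∀ (i : ℤ) (l : ℕ), win y i l ∈ Lang X) : y ∈ X := by
  classical
  have hch : ∀ n : ℕ, ∃ x, x ∈ X ∧ ∀ i : ℤ, -(n:ℤ) ≤ i → i ≤ n → x i = y i := by
    intro n
    obtain ⟨x, hxX, hocc⟩ := h (-(n:ℤ)) (2*n+1)
    obtain ⟨j, hj⟩ := occursIn_iff.1 hocc
    rw [win_length] at hj
    refine ⟨shiftZ (j + n) x, mem_shiftZ hX _ hxX, fun i hi1 hi2 => ?_⟩
    have ht : ((i + n).toNat) < 2*n+1 := by omega
    have e1 := List.getElem_of_eq hj (by simp only [win_length]; exact ht)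
    rw [win_getElem _ _ _ _ (by simp only [win_length]; exact ht),
        win_getElem _ _ _ _ (by simp only [win_length]; exact ht)] at e1
    simp only [shiftZ_apply]
    rw [show i + (j + (n:ℤ)) = j + ((i+n).toNat : ℤ) by omega, ← e1]
    congr 1
    omega
  choose p hpX hp using hch
  obtain ⟨y', hy'X, hy'⟩ := exists_cluster hX.2.1 p hpX
  have : y' = y := by
    funext i
    obtain ⟨n, hn1, hn2⟩ := hy' {i} i.natAbs
    rw [hn2 i (Finset.mem_singleton_self i), hp n i (by omega) (by omega)]
  rwa [← this]

lemma isOpen_winEq (u : List A) (j : ℤ) : IsOpen {z : ℤ → A | u = win z j u.length} := by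
  have he : {z : ℤ → A | u = win z j u.length} =
      ⋂ t : Fin u.length, {z : ℤ → A | z (j + (t.1 : ℤ)) = u.get t} := by
    ext z
    simp only [Set.mem_setOf_eq, Set.mem_iInter]
    constructor
    · intro h t
      have := List.getElem_of_eq h t.2
      rw [win_getElem _ _ _ _ (by simpa using t.2)] at this
      rw [List.get_eq_getElem, ← this]
    · intro h
      refine List.ext_get (by simp) fun t h1 h2 => ?_
      simp only [List.get_eq_getElem]
      rw [win_getElem _ _ _ _ (by simpa using h1)]
      exact (h ⟨t, h1⟩).symm
  rw [he]
  refine isOpen_iInter_of_finite fun t => ?_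
  have hc : Continuous fun z : ℤ → A => z (j + (t.1 : ℤ)) := continuous_apply _
  exact hc.isOpen_preimage {u.get t} (isOpen_discrete _)

lemma isOpen_occursSet (u : List A) : IsOpen {z : ℤ → A | OccursIn z u} := by
  have he : {z : ℤ → A | OccursIn z u} = ⋃ i : ℤ, {z : ℤ → A | u = win z i u.length} := by
    ext z
    simp only [Set.mem_setOf_eq, Set.mem_iUnion]
    exact occursIn_iff
  rw [he]
  exact isOpen_iUnion fun i => isOpen_winEq u i

lemma occursIn_shiftT_iff {w : ℤ → A} {u : List A} :
    OccursIn (shiftT w) u ↔ OccursIn w u := by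
  constructor
  · intro h
    have := occursIn_shiftZ (-1) h
    rwa [shiftT_eq_shiftZ, shiftZ_shiftZ, show (-1 : ℤ) + 1 = 0 by ring, shiftZ_zero] at this
  · intro h
    rw [shiftT_eq_shiftZ]
    exact occursIn_shiftZ 1 h

lemma uniform_recurrence {X : Set (ℤ → A)} (hmin : IsMinimalSubshift X) {u : List A}
    (hu : u ∈ Lang X) : ∀ y ∈ X, OccursIn y u := by
  by_contra hc
  push_neg at hc
  obtain ⟨y0, hy0X, hy0⟩ := hc
  have hsub : IsSubshift (X ∩ {z | ¬ OccursIn z u}) := by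
    refine ⟨⟨y0, hy0X, hy0⟩, ?_, ?_⟩
    · exact hmin.1.2.1.inter (isOpen_occursSet u).isClosed_compl
    · ext z
      constructor
      · rintro ⟨w, ⟨hwX, hw⟩, rfl⟩
        refine ⟨?_, fun hocc => hw (occursIn_shiftT_iff.1 hocc)⟩
        rw [← hmin.1.2.2]
        exact ⟨w, hwX, rfl⟩
      · rintro ⟨hzX, hz⟩
        have : z ∈ shiftT '' X := by rw [hmin.1.2.2]; exact hzX
        obtain ⟨w, hwX, rfl⟩ := this
        exact ⟨w, ⟨hwX, fun hocc => hz (occursIn_shiftT_iff.2 hocc)⟩, rfl⟩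
  have hEq := hmin.2 _ Set.inter_subset_left hsub
  obtain ⟨x, hxX, hxu⟩ := hu
  rw [← hEq] at hxX
  exact hxX.2 hxu

lemma syndetic {X : Set (ℤ → A)} (hmin : IsMinimalSubshift X) {u : List A}
    (hu : u ∈ Lang X) :
    ∃ g : ℕ, ∀ y ∈ X, ∀ i : ℤ, ∃ t : ℤ, i ≤ t ∧ t + u.length ≤ i + g ∧
      u = win y t u.length := by
  classical
  have hXcomp : IsCompact X := hmin.1.2.1.isCompact
  have hcover : X ⊆ ⋃ j : ℤ, {z | u = win z j u.length} := by
    intro y hy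
    obtain ⟨j, hj⟩ := occursIn_iff.1 (uniform_recurrence hmin hu y hy)
    exact Set.mem_iUnion.2 ⟨j, hj⟩
  obtain ⟨T, hT⟩ := hXcomp.elim_finite_subcover _ (fun j => isOpen_winEq u j) hcover
  set g0 : ℕ := T.sup fun j => j.natAbs with hg0
  refine ⟨2 * g0 + u.length, fun y hy i => ?_⟩
  have h1 : shiftZ (i + g0) y ∈ X := mem_shiftZ hmin.1 _ hy
  obtain ⟨j, hjT, hj⟩ := Set.mem_iUnion₂.1 (hT h1)
  rw [Set.mem_setOf_eq, win_shiftZ] at hj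
  have hjb : j.natAbs ≤ g0 := Finset.le_sup (f := fun j : ℤ => j.natAbs) hjT
  exact ⟨j + (i + g0), by omega, by omega, hj⟩

lemma exists_minimal_subshift {Y : Set (ℤ → A)} (hY : IsSubshift Y) :
    ∃ Z, Z ⊆ Y ∧ IsMinimalSubshift Z := by
  classical
  set S : Set (Set (ℤ → A)) := {Z | Z ⊆ Y ∧ IsSubshift Z} with hS
  have hzorn : ∀ c ⊆ S, IsChain (· ⊆ ·) c → c.Nonempty → ∃ lb ∈ S, ∀ s ∈ c, lb ⊆ s := by
    intro c hcS hchain hcne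
    have : Nonempty c := hcne.to_subtype
    have hdir : Directed (· ⊇ ·) (fun Z : c => (Z : Set (ℤ → A))) := by
      intro a b
      rcases eq_or_ne a b with rfl | hab
      · exact ⟨a, subset_rfl, subset_rfl⟩
      rcases hchain.total a.2 b.2 with h | h
      · exact ⟨a, subset_rfl, h⟩
      · exact ⟨b, h, subset_rfl⟩
    have hint := IsCompact.nonempty_iInter_of_directed_nonempty_isCompact_isClosed
      (fun Z : c => (Z : Set (ℤ → A))) hdir
      (fun Z => ((hcS Z.2).2).1)
      (fun Z => ((hcS Z.2).2).2.1.isCompact)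
      (fun Z => ((hcS Z.2).2).2.1)
    obtain ⟨Z0, hZ0⟩ := hcne
    refine ⟨⋂ Z : c, (Z : Set (ℤ → A)), ⟨?_, hint, ?_, ?_⟩, ?_⟩
    · exact (Set.iInter_subset _ (⟨Z0, hZ0⟩ : c)).trans (hcS hZ0).1
    · exact isClosed_iInter fun Z => ((hcS Z.2).2).2.1
    · rw [shiftT_eq_homeo, Set.image_iInter shiftHomeo.bijective]
      refine Set.iInter_congr fun Z => ?_
      rw [← shiftT_eq_homeo]
      exact ((hcS Z.2).2).2.2
    · intro s hs
      exact Set.iInter_subset _ (⟨s, hs⟩ : c)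
  obtain ⟨Z, hZY, hZmin⟩ := zorn_superset_nonempty S hzorn Y ⟨subset_rfl, hY⟩
  refine ⟨Z, hZmin.1.1, hZmin.1.2, fun W hWZ hW => ?_⟩
  exact subset_antisymm hWZ (hZmin.2 ⟨hWZ.trans hZmin.1.1, hW⟩ hWZ)

lemma bounded_words_bounded {σ : A → List A} {X : Set (ℤ → A)}
    (hmin : IsMinimalSubshift X)
    (htame : ¬ ∀ x ∈ X, ∀ i, IsBounded σ (x i)) :
    ∃ KB : ℕ, ∀ u ∈ Lang X, (∀ b ∈ u, IsBounded σ b) → u.length ≤ KB := by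
  classical
  by_contra hcon
  push_neg at hcon
  have hch : ∀ n : ℕ, ∃ x, x ∈ X ∧ ∀ i : ℤ, -(n:ℤ) ≤ i → i ≤ n → IsBounded σ (x i) := by
    intro n
    obtain ⟨u, hu, hub, hlen⟩ := hcon (2*n+1)
    obtain ⟨x, hxX, hocc⟩ := hu
    obtain ⟨j, hj⟩ := occursIn_iff.1 hocc
    refine ⟨shiftZ (j + n) x, mem_shiftZ hmin.1 _ hxX, fun i h1 h2 => ?_⟩
    have ht : ((i+n).toNat) < u.length := by omega
    have e1 := List.getElem_of_eq hj ht
    rw [win_getElem _ _ _ _ (by simpa using ht)] at e1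
    have hmem : x (j + ((i+n).toNat : ℤ)) ∈ u := by
      rw [← e1]
      exact List.getElem_mem _
    simp only [shiftZ_apply]
    rw [show i + (j + (n:ℤ)) = j + ((i+n).toNat : ℤ) by omega]
    exact hub _ hmem
  choose p hpX hp using hch
  obtain ⟨z, hzX, hz⟩ := exists_cluster hmin.1.2.1 p hpX
  have hzb : ∀ i, IsBounded σ (z i) := by
    intro i
    obtain ⟨n, hn1, hn2⟩ := hz {i} i.natAbs
    rw [hn2 i (Finset.mem_singleton_self i)]
    exact hp n i (by omega) (by omega)
  have hEq := hmin.2 _ (orbitClosure_subset hmin.1 hzX) (isSubshift_orbitClosure z)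
  push_neg at htame
  obtain ⟨x, hxX, i, hxi⟩ := htame
  rw [← hEq] at hxX
  obtain ⟨w, ⟨k, rfl⟩, hagree⟩ := closure_agree hxX {i}
  have := hagree i (Finset.mem_singleton_self i)
  simp only [shiftZ_apply] at this
  exact hxi (by rw [← this]; exact hzb (i + k))
end LangKit
section PadKit

/-- padded bi-infinite version of a finite word -/
def padW (W : List A) (ofs : ℤ) (d : A) : ℤ → A := fun j => W.getD (ofs + j).toNat d

lemma win_padW {W : List A} {ofs i : ℤ} {l : ℕ} {d : A}
    (h0 : 0 ≤ ofs + i) (h1 : ofs + i + l ≤ W.length) :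
    win (padW W ofs d) i l = (W.drop (ofs + i).toNat).take l := by
  have hlen : ((W.drop (ofs + i).toNat).take l).length = l := by
    rw [List.length_take, List.length_drop]
    omega
  refine List.ext_get (by rw [win_length, hlen]) fun t ht1 ht2 => ?_
  have htl : t < l := by rwa [hlen] at ht2
  simp only [List.get_eq_getElem]
  rw [win_getElem _ _ _ _ ht1, List.getElem_take, List.getElem_drop]
  unfold padW
  rw [List.getD_eq_getElem _ _ (by omega)]
  congr 1
  omega

lemma dropTake_infix (W : List A) (j l : ℕ) : (W.drop j).take l <:+: W :=
  ((List.take_prefix _ _).isInfix).trans ((List.drop_suffix _ _).isInfix)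

end PadKit

section Desub

variable [Fintype A] [TopologicalSpace A] [DiscreteTopology A] {σ : A → List A}

lemma desub (hne : NonErasing σ) {Z : Set (ℤ → A)} (hZsub : IsSubshift Z)
    (hZX : Z ⊆ Xsub σ) :
    ∃ Z', (IsMinimalSubshift Z' ∧ Z' ⊆ Xsub σ) ∧ ∀ u ∈ Lang Z', applyW σ u ∈ Lang Z := by
  classical
  obtain ⟨x, hxZ⟩ := hZsub.1
  set d := x 0 with hd
  have hstep : ∀ n : ℕ, ∃ (W : List A) (ofs : ℕ) (a : A) (m : ℕ), W = iterW σ m [a] ∧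
      ∀ (i : ℤ) (l : ℕ), (i.natAbs + l + 2) * maxLen σ ≤ n →
        0 ≤ (ofs : ℤ) + i ∧ (ofs : ℤ) + i + l ≤ W.length ∧
        applyW σ ((W.drop ((ofs : ℤ) + i).toNat).take l) ∈ Lang Z := by
    intro n
    set u : List A := win x (-(n:ℤ)-1) (2*n+3) with hu
    have hulen : u.length = 2*n+3 := by rw [hu, win_length]
    have huL : u ∈ Lang Z := win_mem_Lang hxZ _ _
    obtain ⟨a, m₀, hinf⟩ := hZX hxZ u (occursIn_win x _ _)
    have hm₀ : 1 ≤ m₀ := by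
      by_contra hm
      have hm0 : m₀ = 0 := by omega
      subst hm0
      have := hinf.length_le
      simp only [iterW_zero, List.length_singleton] at this
      omega
    obtain ⟨m, rfl⟩ : ∃ m, m₀ = m + 1 := ⟨m₀ - 1, by omega⟩
    set W := iterW σ m [a] with hW
    have happ : applyW σ W = iterW σ (m+1) [a] := (iterW_succ' σ m [a]).symm
    obtain ⟨P, S, hPS⟩ : ∃ P S, applyW σ W = P ++ u ++ S := by
      obtain ⟨P, S, h⟩ := hinf
      exact ⟨P, S, by rw [happ, ← h]⟩
    set q : ℕ := P.length + (n+1) with hq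
    set ι : ℕ := Nat.findGreatest (fun j => cum σ W j ≤ q) W.length with hι
    have hcum0 : cum σ W ι ≤ q := by
      rw [hι]
      exact Nat.findGreatest_spec (P := fun j => cum σ W j ≤ q) (Nat.zero_le _) (by simp)
    have hlenapp : (applyW σ W).length = P.length + (2*n+3) + S.length := by
      rw [hPS]
      simp only [List.length_append]
      omega
    have hsatgt : q < cum σ W W.length := by
      rw [cum_sat le_rfl, hlenapp]
      omega
    have hιlt : ι < W.length := by
      rcases Nat.lt_or_ge ι W.length with h | h
      · exact h
      · exfalso
        have heq : ι = W.length := le_antisymm (Nat.findGreatest_le _) h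
        rw [heq] at hcum0
        omega
    have hcum1 : q < cum σ W (ι + 1) := by
      by_contra hle
      push_neg at hle
      exact (Nat.findGreatest_is_greatest (Nat.lt_succ_self _) hιlt) hle
    refine ⟨W, ι, a, m, rfl, fun i l hcond => ?_⟩
    have hM1 : 1 ≤ maxLen σ := one_le_maxLen σ
    set M := maxLen σ with hM
    set N : ℕ := i.natAbs + l with hN
    have hcond' : (N + 2) * M ≤ n := hcond
    have hNM2 : (N+2)*M = N*M + M + M := by ring
    have hι_big : N + 1 ≤ ι := by
      by_contra hsm
      push_neg at hsm
      have h1 : cum σ W (ι+1) ≤ (ι+1) * M := by rw [hM]; exact cum_le W (ι+1)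
      have h2 : (ι+1) * M ≤ (N+1) * M := Nat.mul_le_mul_right _ (by omega)
      have h3 : (N+1)*M + M = (N+2)*M := by ring
      omega
    have hb0 : 0 ≤ (ι:ℤ) + i := by omega
    set j₀ : ℕ := ((ι:ℤ) + i).toNat with hj₀
    have hj₀l : ι - N ≤ j₀ ∧ j₀ + l ≤ ι + N := by omega
    have hcumub : cum σ W (ι + N) ≤ q + N * M := by
      have h0 : cum σ W (ι + N) ≤ cum σ W ι + N * M := by
        rw [hM]
        exact cum_add_le (σ := σ) W ι N
      omega
    have hιN : ι + N < W.length := by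
      have hlt : cum σ W (ι + N) < cum σ W W.length := by
        rw [cum_sat le_rfl, hlenapp]
        have hqe : q = P.length + (n+1) := hq
        have e1 : N*M + M + M ≤ n := by omega
        have e2 : cum σ W (ι + N) ≤ q + N*M := hcumub
        omega
      by_contra hge
      push_neg at hge
      rw [cum_sat hge, cum_sat le_rfl] at hlt
      omega
    have hb1 : (ι:ℤ) + i + l ≤ W.length := by omega
    refine ⟨hb0, hb1, ?_⟩
    have hdec := applyW_decomp σ W j₀ l
    have hE : (applyW σ (W.take j₀)).length = cum σ W j₀ := rfl
    have hmid : cum σ W j₀ + (applyW σ ((W.drop j₀).take l)).length = cum σ W (j₀ + l) :=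
      cum_decomp_len W j₀ l
    have hlow : P.length ≤ cum σ W j₀ := by
      have h1 : cum σ W ι ≤ cum σ W ((ι - N) + N) := cum_mono (by omega)
      have h2 : cum σ W ((ι - N) + N) ≤ cum σ W (ι - N) + N * M := by
        rw [hM]; exact cum_add_le W _ N
      have h3 : cum σ W (ι - N) ≤ cum σ W j₀ := cum_mono (by omega)
      have h4 : cum σ W (ι+1) ≤ cum σ W ι + M := by rw [hM]; exact cum_succ_le W ι
      omega
    have hupp : cum σ W j₀ + (applyW σ ((W.drop j₀).take l)).length ≤ P.length + u.length := by
      rw [hmid]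
      have h1 : cum σ W (j₀ + l) ≤ cum σ W (ι + N) := cum_mono (by omega)
      omega
    have hinfu : applyW σ ((W.drop j₀).take l) <:+: u := by
      refine extract_mid (hPS.symm.trans hdec) ?_ ?_
      · rw [hE]
        exact hlow
      · rw [hE]
        exact hupp
    exact Lang_infix hinfu huL
  choose Wf ofs af mf hWiter hprop using hstep
  set p : ℕ → ℤ → A := fun n => padW (Wf n) (ofs n) d with hp
  obtain ⟨y, -, hy⟩ := exists_cluster isClosed_univ p (fun n => Set.mem_univ _)
  have hkey : ∀ (i : ℤ) (l : ℕ),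
      (∃ a' m', win y i l <:+: iterW σ m' [a']) ∧ applyW σ (win y i l) ∈ Lang Z := by
    intro i l
    set s : Finset ℤ := (Finset.range l).image fun t : ℕ => i + (t:ℤ) with hs
    obtain ⟨n, hn1, hn2⟩ := hy s ((i.natAbs + l + 2) * maxLen σ)
    obtain ⟨hb0, hb1, hbL⟩ := hprop n i l hn1
    have hwin : win y i l = win (p n) i l := by
      refine List.ext_get (by simp) fun t h1 h2 => ?_
      simp only [List.get_eq_getElem]
      rw [win_getElem _ _ _ _ h1, win_getElem _ _ _ _ h2]
      refine hn2 _ (Finset.mem_image.2 ⟨t, ?_, rfl⟩)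
      rw [Finset.mem_range]
      simpa using h1
    have hwin2 : win (p n) i l = ((Wf n).drop (((ofs n) : ℤ) + i).toNat).take l :=
      win_padW hb0 hb1
    rw [hwin, hwin2]
    refine ⟨⟨af n, mf n, ?_⟩, hbL⟩
    rw [← hWiter n]
    exact dropTake_infix _ _ _
  have hYX : closure (orbSet y) ⊆ Xsub σ := by
    intro z hzY u hocc
    have hu := occursIn_of_mem_orbitClosure hzY hocc
    obtain ⟨i, hui⟩ := occursIn_iff.1 hu
    obtain ⟨a', m', hinf⟩ := (hkey i u.length).1
    exact ⟨a', m', by rwa [← hui] at hinf⟩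
  obtain ⟨Z', hZ'Y, hZ'min⟩ := exists_minimal_subshift (isSubshift_orbitClosure y)
  refine ⟨Z', ⟨hZ'min, hZ'Y.trans hYX⟩, ?_⟩
  intro u hu
  obtain ⟨z, hzZ', hocc⟩ := hu
  have hu2 := occursIn_of_mem_orbitClosure (hZ'Y hzZ') hocc
  obtain ⟨i, hui⟩ := occursIn_iff.1 hu2
  have h3 := (hkey i u.length).2
  rwa [← hui] at h3

lemma desub_cover (hne : NonErasing σ) {Z Z' : Set (ℤ → A)}
    (hZmin : IsMinimalSubshift Z) (hZ'sub : IsSubshift Z')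
    (h : ∀ u ∈ Lang Z', applyW σ u ∈ Lang Z) :
    ∀ u ∈ Lang Z, ∃ v ∈ Lang Z', u <:+: applyW σ v := by
  classical
  obtain ⟨z, hzZ'⟩ := hZ'sub.1
  set d := z 0 with hd
  set p : ℕ → ℤ → A := fun n =>
    padW (applyW σ (win z (-(n:ℤ)) (2*n+1))) ((applyW σ (win z (-(n:ℤ)) n)).length) d with hp
  obtain ⟨y, -, hy⟩ := exists_cluster isClosed_univ p (fun _ => Set.mem_univ _)
  have hkey : ∀ (i : ℤ) (l : ℕ), ∃ v ∈ Lang Z', win y i l <:+: applyW σ v := by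
    intro i l
    set s : Finset ℤ := (Finset.range l).image fun t : ℕ => i + (t:ℤ) with hs
    obtain ⟨n, hn1, hn2⟩ := hy s (i.natAbs + l)
    set V := win z (-(n:ℤ)) (2*n+1) with hV
    set L : ℕ := (applyW σ (win z (-(n:ℤ)) n)).length with hL
    have hLn : n ≤ L := by
      have := length_applyW_ge hne (win z (-(n:ℤ)) n)
      rw [win_length] at this
      exact this
    have htot : L + (n+1) ≤ (applyW σ V).length := by
      have hsplit : V = win z (-(n:ℤ)) n ++ win z (-(n:ℤ)+n) (n+1) := by
        rw [hV, show 2*n+1 = n + (n+1) by ring, win_append]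
      have hlen2 : (applyW σ V).length
          = L + (applyW σ (win z (-(n:ℤ)+n) (n+1))).length := by
        rw [hsplit, applyW_append, List.length_append]
      have h2 := length_applyW_ge hne (win z (-(n:ℤ)+n) (n+1))
      rw [win_length] at h2
      omega
    have hb0 : 0 ≤ (L:ℤ) + i := by omega
    have hb1 : (L:ℤ) + i + l ≤ (applyW σ V).length := by omega
    have hwin : win y i l = win (p n) i l := by
      refine List.ext_get (by simp) fun t h1 h2 => ?_
      simp only [List.get_eq_getElem]
      rw [win_getElem _ _ _ _ h1, win_getElem _ _ _ _ h2]
      refine hn2 _ (Finset.mem_image.2 ⟨t, ?_, rfl⟩)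
      rw [Finset.mem_range]
      simpa using h1
    have hwin2 : win (p n) i l = ((applyW σ V).drop ((L:ℤ)+i).toNat).take l :=
      win_padW hb0 hb1
    refine ⟨V, win_mem_Lang hzZ' _ _, ?_⟩
    rw [hwin, hwin2]
    exact dropTake_infix _ _ _
  have hyZ : y ∈ Z := by
    refine mem_of_forall_win_mem hZmin.1 (fun i l => ?_)
    obtain ⟨v, hv, hinf⟩ := hkey i l
    exact Lang_infix hinf (h v hv)
  have hEq := hZmin.2 _ (orbitClosure_subset hZmin.1 hyZ) (isSubshift_orbitClosure y)
  intro u hu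
  obtain ⟨w, hwZ, hocc⟩ := hu
  rw [← hEq] at hwZ
  have hoccy := occursIn_of_mem_orbitClosure hwZ hocc
  obtain ⟨i, hui⟩ := occursIn_iff.1 hoccy
  obtain ⟨v, hv, hinf⟩ := hkey i u.length
  exact ⟨v, hv, by rwa [← hui] at hinf⟩

end Desub
section Comb

lemma comb_tel {F : Set A → Set A} {D : ℕ → Set A} (hrec : ∀ m, F (D (m+1)) = D m) :
    ∀ m s, F^[s] (D (m + s)) = D m := by
  intro m s
  induction s with
  | zero => simp
  | succ s ih =>
    rw [show m + (s+1) = (m + s) + 1 by ring, Function.iterate_succ_apply, hrec, ih]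

lemma comb_main [Finite A] {F : Set A → Set A} {D : ℕ → Set A}
    (hrec : ∀ m, F (D (m+1)) = D m) :
    (∃ q, 0 < q ∧ F^[q] (D 0) = D 0) ∧
      (∀ m k, F^[k] (D 0) = D 0 → D (k * m) = D 0) := by
  classical
  have htel := comb_tel hrec
  have hrange : ∀ s t : ℕ, s ≤ t → Set.range (F^[t]) ⊆ Set.range (F^[s]) := by
    intro s t hst
    rintro y ⟨x, rfl⟩
    obtain ⟨r, rfl⟩ : ∃ r, t = s + r := ⟨t - s, by omega⟩
    exact ⟨F^[r] x, by rw [← Function.iterate_add_apply]⟩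
  set Om : Set (Set A) := ⋂ s, Set.range (F^[s]) with hOm
  have hDOm : ∀ m, D m ∈ Om := fun m => Set.mem_iInter.2 fun s => ⟨D (m + s), htel m s⟩
  have hmaps : Set.MapsTo F Om Om := by
    intro w hw
    refine Set.mem_iInter.2 fun s => ?_
    obtain ⟨x, hx⟩ := Set.mem_iInter.1 hw s
    exact ⟨F x, by rw [← Function.iterate_succ_apply F s x, Function.iterate_succ_apply' F s x, hx]⟩
  have hsurj : Set.SurjOn F Om Om := by
    intro w hw
    have hP : ∀ s : ℕ, ∃ y, F y = w ∧ y ∈ Set.range (F^[s]) := by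
      intro s
      obtain ⟨x, hx⟩ := Set.mem_iInter.1 hw (s+1)
      exact ⟨F^[s] x, by rw [← Function.iterate_succ_apply' F s x, hx], ⟨x, rfl⟩⟩
    choose ys hys1 hys2 using hP
    obtain ⟨y₀, hy₀⟩ := Finite.exists_infinite_fiber ys
    have hinf : (ys ⁻¹' {y₀}).Infinite := Set.infinite_coe_iff.1 hy₀
    have hy₀mem : ∀ s, y₀ ∈ Set.range (F^[s]) := by
      intro s
      obtain ⟨s', hs'mem, hs'gt⟩ := hinf.exists_gt s
      have he : ys s' = y₀ := hs'mem
      rw [← he]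
      exact hrange s s' (le_of_lt hs'gt) (hys2 s')
    have hy₀F : F y₀ = w := by
      obtain ⟨s', hs'mem, -⟩ := hinf.exists_gt 0
      have he : ys s' = y₀ := hs'mem
      rw [← he]
      exact hys1 s'
    exact ⟨y₀, Set.mem_iInter.2 hy₀mem, hy₀F⟩
  have hfin : Om.Finite := Set.toFinite Om
  have hinj : Set.InjOn F Om := ((hfin.surjOn_iff_bijOn_of_mapsTo hmaps).1 hsurj).injOn
  have hinjIter : ∀ t, Set.InjOn (F^[t]) Om := by
    intro t
    induction t with
    | zero => intro x _ y _ h; simpa using h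
    | succ t ih =>
      intro x hx y hy h
      rw [Function.iterate_succ_apply, Function.iterate_succ_apply] at h
      exact hinj hx hy (ih (hmaps hx) (hmaps hy) h)
  constructor
  · obtain ⟨i, j, hij, hDij⟩ := Finite.exists_ne_map_eq_of_infinite D
    have key : ∀ i j : ℕ, i < j → D i = D j → 0 < j - i ∧ F^[j-i] (D 0) = D 0 := by
      intro i j hlt hDij
      refine ⟨by omega, ?_⟩
      have h1 : F^[j-i] (D j) = D i := by
        have := htel i (j - i)
        rwa [show i + (j-i) = j by omega] at this
      rw [← hDij] at h1
      have h3 : F^[i] (D i) = D 0 := by simpa using htel 0 i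
      calc F^[j-i] (D 0) = F^[j-i] (F^[i] (D i)) := by rw [h3]
      _ = F^[i] (F^[j-i] (D i)) := by
          rw [← Function.iterate_add_apply, ← Function.iterate_add_apply, Nat.add_comm]
      _ = F^[i] (D i) := by rw [h1]
      _ = D 0 := h3
    rcases Nat.lt_trichotomy i j with h | h | h
    · obtain ⟨h1, h2⟩ := key i j h hDij
      exact ⟨j - i, h1, h2⟩
    · exact absurd h hij
    · obtain ⟨h1, h2⟩ := key j i h hDij.symm
      exact ⟨i - j, h1, h2⟩
  · intro m k hk
    have h1 : F^[k*m] (D (k*m)) = D 0 := by simpa using htel 0 (k*m)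
    have h2 : F^[k*m] (D 0) = D 0 := iterate_period_mul hk m
    exact hinjIter (k*m) (hDOm (k*m)) (hDOm 0) (h1.trans h2.symm)

end Comb

section Chain

variable [Fintype A] [TopologicalSpace A] [DiscreteTopology A] {σ : A → List A}

lemma chain_exists (hne : NonErasing σ) {X : Set (ℤ → A)} (hmin : IsMinimalSubshift X)
    (hXsub : X ⊆ Xsub σ) :
    ∃ Zc : ℕ → Set (ℤ → A), Zc 0 = X ∧
      (∀ m, IsMinimalSubshift (Zc m) ∧ Zc m ⊆ Xsub σ) ∧
      (∀ m, ∀ u ∈ Lang (Zc (m+1)), applyW σ u ∈ Lang (Zc m)) := by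
  classical
  have hstep : ∀ Z : {Z : Set (ℤ → A) // IsMinimalSubshift Z ∧ Z ⊆ Xsub σ},
      ∃ Z' : {Z : Set (ℤ → A) // IsMinimalSubshift Z ∧ Z ⊆ Xsub σ},
        ∀ u ∈ Lang (Z' : Set (ℤ → A)), applyW σ u ∈ Lang (Z : Set (ℤ → A)) := by
    rintro ⟨Z, hZ1, hZ2⟩
    obtain ⟨Z', ⟨h1, h2⟩, h3⟩ := desub hne hZ1.1 hZ2
    exact ⟨⟨Z', h1, h2⟩, h3⟩
  choose f hf using hstep
  set g : ℕ → {Z : Set (ℤ → A) // IsMinimalSubshift Z ∧ Z ⊆ Xsub σ} :=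
    fun m => Nat.rec ⟨X, hmin, hXsub⟩ (fun _ ih => f ih) m with hg
  exact ⟨fun m => (g m : Set (ℤ → A)), rfl, fun m => (g m).2, fun m u hu => hf (g m) u hu⟩

end Chain

section SmallHelpers

variable [Fintype A] [TopologicalSpace A] [DiscreteTopology A] {σ : A → List A}

lemma occursIn_singleton {x : ℤ → A} {c : A} : OccursIn x [c] ↔ ∃ i, x i = c := by
  constructor
  · rintro ⟨i, h⟩
    have := h ⟨0, by simp⟩
    simp only [List.get_eq_getElem] at this
    exact ⟨i + ((0:ℕ):ℤ), by simpa using this⟩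
  · rintro ⟨i, h⟩
    refine ⟨i, fun j => ?_⟩
    have hj2 : j.1 < 1 := by simpa using j.2
    have hj : j.1 = 0 := by omega
    simp only [List.get_eq_getElem, hj]
    simpa using h

lemma mem_alphCX {Z : Set (ℤ → A)} {c : A} :
    c ∈ alphCX σ Z ↔ IsGrowing σ c ∧ [c] ∈ Lang Z := by
  unfold alphCX Lang
  simp only [Set.mem_setOf_eq]
  constructor
  · rintro ⟨hg, x, hx, i, hi⟩
    exact ⟨hg, x, hx, occursIn_singleton.2 ⟨i, hi⟩⟩
  · rintro ⟨hg, x, hx, hocc⟩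
    obtain ⟨i, hi⟩ := occursIn_singleton.1 hocc
    exact ⟨hg, x, hx, i, hi⟩

lemma bounded_word_iter {u : List A} (hu : ∀ b ∈ u, IsBounded σ b) (n : ℕ) :
    ∀ b ∈ iterW σ n u, IsBounded σ b := by
  induction n generalizing u with
  | zero => simpa using hu
  | succ n ih =>
    rw [iterW_succ]
    refine ih fun b hb => ?_
    obtain ⟨a, ha, hba⟩ := mem_applyW.1 hb
    exact isBounded_of_mem_apply (hu a ha) hba

lemma mem_of_singleton_infix {c : A} {w : List A} (h : [c] <:+: w) : c ∈ w := by
  obtain ⟨s, t, rfl⟩ := h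
  simp

lemma infix_of_long {X : Set (ℤ → A)} (hmin : IsMinimalSubshift X) {u : List A}
    (hu : u ∈ Lang X) :
    ∃ g : ℕ, ∀ w ∈ Lang X, g ≤ w.length → u <:+: w := by
  obtain ⟨g, hg⟩ := syndetic hmin hu
  refine ⟨2 * g + u.length + g, fun w hw hlen => ?_⟩
  obtain ⟨xb, hxb, hocc⟩ := hw
  obtain ⟨i, hwi⟩ := occursIn_iff.1 hocc
  obtain ⟨t, ht1, ht2, ht3⟩ := hg xb hxb i
  rw [hwi]
  have h1 : u = win xb t u.length := ht3
  rw [h1]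
  exact win_infix ht1 (by omega)

lemma isolated_words_left (hne : NonErasing σ) {c : A} {n : ℕ} {u v : List A}
    (hu : u ≠ []) (hub : ∀ b ∈ u, IsBounded σ b)
    (heq : iterW σ n [c] = u ++ c :: v) :
    ∀ m : ℕ, 1 ≤ m → ∃ Wb v', (∀ b ∈ Wb, IsBounded σ b) ∧ m ≤ Wb.length ∧
      iterW σ (n*m) [c] = Wb ++ c :: v' := by
  intro m hm
  induction m with
  | zero => omega
  | succ m ih =>
    rcases Nat.eq_zero_or_pos m with rfl | hmpos
    · refine ⟨u, v, hub, ?_, ?_⟩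
      · have := List.length_pos_iff.2 hu
        omega
      · rw [show n * (0+1) = n by ring]
        exact heq
    · obtain ⟨Wb, v', hb1, hb2, hb3⟩ := ih (by omega)
      refine ⟨iterW σ n Wb ++ u, v ++ iterW σ n v', ?_, ?_, ?_⟩
      · intro b hb
        rcases List.mem_append.1 hb with h | h
        · exact bounded_word_iter hb1 n b h
        · exact hub b h
      · have h2 : Wb.length ≤ (iterW σ n Wb).length := by
          have := length_iterW_mono' hne (Nat.zero_le n) Wb
          simpa using this
        have := List.length_pos_iff.2 hu
        simp only [List.length_append]
        omega
      · have h3 : iterW σ (n*(m+1)) [c] = iterW σ n (iterW σ (n*m) [c]) := by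
          rw [← iterW_add, show n + n*m = n*(m+1) by ring]
        rw [h3, hb3, show Wb ++ c :: v' = Wb ++ [c] ++ v' by simp,
          iterW_append, iterW_append, heq]
        simp [List.append_assoc]

lemma isolated_words_right (hne : NonErasing σ) {c : A} {n : ℕ} {u v : List A}
    (hu : u ≠ []) (hub : ∀ b ∈ u, IsBounded σ b)
    (heq : iterW σ n [c] = v ++ c :: u) :
    ∀ m : ℕ, 1 ≤ m → ∃ Wb v', (∀ b ∈ Wb, IsBounded σ b) ∧ m ≤ Wb.length ∧
      iterW σ (n*m) [c] = v' ++ c :: Wb := by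
  intro m hm
  induction m with
  | zero => omega
  | succ m ih =>
    rcases Nat.eq_zero_or_pos m with rfl | hmpos
    · refine ⟨u, v, hub, ?_, ?_⟩
      · have := List.length_pos_iff.2 hu
        omega
      · rw [show n * (0+1) = n by ring]
        exact heq
    · obtain ⟨Wb, v', hb1, hb2, hb3⟩ := ih (by omega)
      refine ⟨u ++ iterW σ n Wb, iterW σ n v' ++ v, ?_, ?_, ?_⟩
      · intro b hb
        rcases List.mem_append.1 hb with h | h
        · exact hub b h
        · exact bounded_word_iter hb1 n b h
      · have h2 : Wb.length ≤ (iterW σ n Wb).length := by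
          have := length_iterW_mono' hne (Nat.zero_le n) Wb
          simpa using this
        have := List.length_pos_iff.2 hu
        simp only [List.length_append]
        omega
      · have h3 : iterW σ (n*(m+1)) [c] = iterW σ n (iterW σ (n*m) [c]) := by
          rw [← iterW_add, show n + n*m = n*(m+1) by ring]
        rw [h3, hb3, show v' ++ c :: Wb = v' ++ [c] ++ Wb by simp,
          iterW_append, iterW_append, heq]
        simp [List.append_assoc]

end SmallHelpers

/-- Every tame minimal component of `X_σ` (one containing a growing letter) is
`X_{σᵏ|_{D∪B}}` for a minimal alphabet `D = alph_C(X) ⊆ C_niso` of period `k`. -/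
theorem stmt14 [Fintype A] [TopologicalSpace A] [DiscreteTopology A]
    (σ : A → List A) (hσ : NonErasing σ)
    (X : Set (ℤ → A)) (hXσ : X ⊆ Xsub σ) (hmin : IsMinimalSubshift X)
    (htame : ¬ ∀ x ∈ X, ∀ i, IsBounded σ (x i)) :
    ∃ k, 1 ≤ k ∧ (∀ c ∈ alphCX σ X, NonIsolated σ c) ∧
      IsKPeriodicAlph σ (alphCX σ X) k ∧ IsMinimalAlph σ (alphCX σ X) ∧
      X = Xrestr σ (alphCX σ X ∪ {a | IsBounded σ a}) k := by
  have htame' : ∃ x ∈ X, ∃ i, IsGrowing σ (x i) := by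
    push_neg at htame
    exact htame
  obtain ⟨x₀, hx₀X, i₀, hgrow₀⟩ := htame'
  set D : Set A := alphCX σ X with hD
  set c₀ := x₀ i₀ with hc₀def
  have hc₀ : c₀ ∈ D := ⟨hgrow₀, x₀, hx₀X, i₀, rfl⟩
  have hc₀grow : IsGrowing σ c₀ := hgrow₀
  obtain ⟨Zc, hZc0, hZcprops, hZcstep⟩ := chain_exists hσ hmin hXσ
  set Dm : ℕ → Set A := fun m => alphCX σ (Zc m) with hDmdef
  have hDm0 : Dm 0 = D := by
    show alphCX σ (Zc 0) = D
    rw [hZc0]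
  have hcomp : ∀ m, ∀ u ∈ Lang (Zc m), iterW σ m u ∈ Lang (Zc 0) := by
    intro m
    induction m with
    | zero => intro u hu; exact hu
    | succ m ih =>
      intro u hu
      have h1 := hZcstep m u hu
      have h2 := ih _ h1
      rwa [← iterW_succ] at h2
  have hrec : ∀ m, FAlph σ (Dm (m+1)) = Dm m := by
    intro m
    apply Set.Subset.antisymm
    · intro c hcm
      simp only [FAlph, Set.mem_iUnion] at hcm
      obtain ⟨b, hbD, hcb⟩ := hcm
      obtain ⟨hbg, hbL⟩ := mem_alphCX.1 hbD
      have h1 : applyW σ [b] ∈ Lang (Zc m) := hZcstep m [b] hbL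
      rw [applyW_singleton] at h1
      exact mem_alphCX.2 ⟨hcb.1, singleton_mem_Lang hcb.2 h1⟩
    · intro c hcm
      obtain ⟨hcg, hcL⟩ := mem_alphCX.1 hcm
      obtain ⟨v, hvL, hinf⟩ := desub_cover hσ (hZcprops m).1 (hZcprops (m+1)).1.1
        (hZcstep m) [c] hcL
      have hcv : c ∈ applyW σ v := mem_of_singleton_infix hinf
      obtain ⟨b, hbv, hcb⟩ := mem_applyW.1 hcv
      have hbg : IsGrowing σ b := fun hbb => hcg (isBounded_of_mem_apply hbb hcb)
      refine Set.mem_iUnion.2 ⟨b, ?_⟩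
      exact Set.mem_iUnion.2 ⟨mem_alphCX.2 ⟨hbg, singleton_mem_Lang hbv hvL⟩, hcg, hcb⟩
  obtain ⟨⟨q, hq0, hqper⟩, hDper⟩ := comb_main hrec
  have hex : ∃ k, 0 < k ∧ (FAlph σ)^[k] (Dm 0) = Dm 0 := ⟨q, hq0, hqper⟩
  set k₀ := Nat.find hex with hk₀
  obtain ⟨hk₀pos, hk₀per⟩ := Nat.find_spec hex
  have hN1 : ∀ a ∈ D, ∀ n : ℕ, iterW σ (k₀ * n) [a] ∈ Lang X := by
    intro a ha n
    have h1 : Dm (k₀ * n) = Dm 0 := hDper n k₀ hk₀per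
    have h2 : a ∈ Dm (k₀ * n) := by
      rw [h1, hDm0]
      exact ha
    have h3 : [a] ∈ Lang (Zc (k₀ * n)) := (mem_alphCX.1 h2).2
    have h4 := hcomp (k₀ * n) [a] h3
    rwa [hZc0] at h4
  obtain ⟨KB, hKB⟩ := bounded_words_bounded hmin htame
  obtain ⟨KG, hKG⟩ := exists_global_bound σ
  have hKP : IsKPeriodicAlph σ D k₀ := by
    refine ⟨⟨c₀, hc₀⟩, fun a ha => (mem_alphCX.1 ha).1, hk₀pos, ?_, ?_⟩
    · rw [← hDm0]
      exact hk₀per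
    · intro j hj hjper
      refine Nat.find_min' hex ⟨hj, ?_⟩
      rw [hDm0]
      exact hjper
  refine ⟨k₀, hk₀pos, ?_, hKP, ?_, ?_⟩
  · -- non-isolation
    intro c hcD
    have hcg : IsGrowing σ c := (mem_alphCX.1 hcD).1
    refine ⟨hcg, ?_, ?_⟩
    · rintro ⟨-, n, hn1, u, v, hune, hub, heq⟩
      obtain ⟨Wb, v', hb1, hb2, hb3⟩ := isolated_words_left hσ hune hub heq
        (k₀ * (KB+1)) (Nat.mul_pos hk₀pos (Nat.succ_pos KB))
      have h1 : iterW σ (n * (k₀ * (KB+1))) [c] ∈ Lang X := by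
        have := hN1 c hcD (n * (KB+1))
        rwa [show k₀ * (n * (KB+1)) = n * (k₀ * (KB+1)) by ring] at this
      have h2 : Wb ∈ Lang X := Lang_infix ⟨[], c :: v', by simp [hb3]⟩ h1
      have h3 := hKB Wb h2 hb1
      have h4 : KB + 1 ≤ k₀ * (KB + 1) := Nat.le_mul_of_pos_left _ hk₀pos
      omega
    · rintro ⟨-, n, hn1, u, v, hune, hub, heq⟩
      obtain ⟨Wb, v', hb1, hb2, hb3⟩ := isolated_words_right hσ hune hub heq
        (k₀ * (KB+1)) (Nat.mul_pos hk₀pos (Nat.succ_pos KB))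
      have h1 : iterW σ (n * (k₀ * (KB+1))) [c] ∈ Lang X := by
        have := hN1 c hcD (n * (KB+1))
        rwa [show k₀ * (n * (KB+1)) = n * (k₀ * (KB+1)) by ring] at this
      have h2 : Wb ∈ Lang X := Lang_infix ⟨v' ++ [c], [], by simp [hb3]⟩ h1
      have h3 := hKB Wb h2 hb1
      have h4 : KB + 1 ≤ k₀ * (KB + 1) := Nat.le_mul_of_pos_left _ hk₀pos
      omega
  · -- minimal alphabet
    refine ⟨⟨k₀, hKP⟩, ?_⟩
    intro D' hD'sub hD'ne hD'per
    obtain ⟨k', hk'⟩ := hD'per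
    obtain ⟨a, haD'⟩ := hD'ne
    have hk'pos : 0 < k' := hk'.2.2.1
    have hk'per : (FAlph σ)^[k'] D' = D' := hk'.2.2.2.1
    have haD : a ∈ D := hD'sub haD'
    have hag : IsGrowing σ a := (mem_alphCX.1 haD).1
    refine Set.Subset.antisymm hD'sub ?_
    intro c hcD
    have hcL : [c] ∈ Lang X := (mem_alphCX.1 hcD).2
    have hcg : IsGrowing σ c := (mem_alphCX.1 hcD).1
    obtain ⟨g, hgl⟩ := infix_of_long hmin hcL
    obtain ⟨N, hNlen⟩ := growing_len hσ hag g
    set j : ℕ := k₀ * (k' * (N + 1)) with hj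
    have hjN : N ≤ j := by
      have h1 : N+1 ≤ k' * (N+1) := Nat.le_mul_of_pos_left _ hk'pos
      have h2 : k' * (N+1) ≤ k₀ * (k' * (N+1)) := Nat.le_mul_of_pos_left _ hk₀pos
      omega
    have hwL : iterW σ j [a] ∈ Lang X := hN1 a haD (k' * (N+1))
    have hlen : g ≤ (iterW σ j [a]).length := hNlen j hjN
    have hinf := hgl _ hwL hlen
    have hcalphC : c ∈ alphC σ (iterW σ j [a]) := ⟨hcg, mem_of_singleton_infix hinf⟩
    rw [alphC_iter_singleton hag] at hcalphC
    have hsub2 : (FAlph σ)^[j] {a} ⊆ (FAlph σ)^[j] D' :=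
      FAlph_iterate_mono j (by simpa using haD')
    have hcel : c ∈ (FAlph σ)^[j] D' := hsub2 hcalphC
    rwa [show j = k' * (k₀ * (N+1)) by rw [hj]; ring,
      iterate_period_mul hk'per _] at hcel
  · -- X = Xrestr
    apply Set.Subset.antisymm
    · intro x hxX
      intro u hocc
      have huL : u ∈ Lang X := ⟨x, hxX, hocc⟩
      obtain ⟨g, hgl⟩ := infix_of_long hmin huL
      obtain ⟨N, hNlen⟩ := growing_len hσ hc₀grow g
      have hwL : iterW σ (k₀ * (N+1)) [c₀] ∈ Lang X := hN1 c₀ hc₀ (N+1)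
      have hlen : g ≤ (iterW σ (k₀ * (N+1)) [c₀]).length := by
        refine hNlen _ ?_
        have h2 : N + 1 ≤ k₀ * (N+1) := Nat.le_mul_of_pos_left _ hk₀pos
        omega
      exact ⟨c₀, Or.inl hc₀, N+1, hgl _ hwL hlen⟩
    · intro x hx
      refine mem_of_forall_win_mem hmin.1 (fun i l => ?_)
      set w := win x (i - (KG+1)) (l + 2*(KG+1)) with hw
      have hoccw : OccursIn x w := occursIn_win _ _ _
      obtain ⟨a, haE, n, hinf⟩ := hx w hoccw
      have haD : a ∈ D := by
        rcases haE with h | h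
        · exact h
        · exfalso
          have h1 : (iterW σ (k₀*n) [a]).length ≤ KG := hKG a h (k₀ * n)
          have h2 : w.length ≤ (iterW σ (k₀*n) [a]).length := hinf.length_le
          rw [hw, win_length] at h2
          omega
      have hiterL : iterW σ (k₀ * n) [a] ∈ Lang X := hN1 a haD n
      have hwL : w ∈ Lang X := Lang_infix hinf hiterL
      have hwin : win x i l <:+: w := by
        rw [hw]
        exact win_infix (by omega) (by push_cast; omega)
      exact Lang_infix hwin hwL

end SubstPaper
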